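/- arXiv:2201.01224 — 3 statements merged into one kernel-verified Lean document; each statement's English description precedes it below -/
import Mathlib

section
/- For every n ≥ 4, the number -4 is an eigenvalue of the adjacency matrix of the n-Queens' graph Q(n). -/
open Finset

/-- Two squares attack each other: same row, column, diagonal or antidiagonal. -/
abbrev queensRel (n : ℕ) (a b : Fin n × Fin n) : Prop :=
  a.1 = b.1 ∨ a.2 = b.2 ∨ (a.1 : ℤ) - (a.2 : ℤ) = (b.1 : ℤ) - (b.2 : ℤ) ∨
    (a.1 : ℤ) + (a.2 : ℤ) = (b.1 : ℤ) + (b.2 : ℤ)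

/-- The n-Queens' graph. -/
def queensGraph (n : ℕ) : SimpleGraph (Fin n × Fin n) := SimpleGraph.fromRel (queensRel n)

instance (n : ℕ) : DecidableRel (queensGraph n).Adj := fun a b =>
  decidable_of_iff (a ≠ b ∧ (queensRel n a b ∨ queensRel n b a)) Iff.rfl

def IsAdjEigenvalue {V : Type*} [Fintype V] [DecidableEq V] (G : SimpleGraph V)
    [DecidableRel G.Adj] (μ : ℝ) : Prop :=
  ∃ X : V → ℝ, X ≠ 0 ∧ (G.adjMatrix ℝ).mulVec X = μ • X

/-- The 4×4 pattern X₄ (0-indexed). -/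
def X4 : Fin 4 × Fin 4 → ℝ := fun p =>
  if (p.1 = 0 ∧ p.2 = 1) ∨ (p.1 = 1 ∧ p.2 = 3) ∨ (p.1 = 2 ∧ p.2 = 0) ∨ (p.1 = 3 ∧ p.2 = 2)
  then 1
  else if (p.1 = 0 ∧ p.2 = 2) ∨ (p.1 = 1 ∧ p.2 = 0) ∨ (p.1 = 2 ∧ p.2 = 3) ∨ (p.1 = 3 ∧ p.2 = 1)
  then -1 else 0

/-- The translate of `X4` with (0-indexed) upper-left corner `(a,b)`, zero elsewhere. -/
def Xab (n a b : ℕ) : Fin n × Fin n → ℝ := fun p =>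
  if h : a ≤ (p.1 : ℕ) ∧ (p.1 : ℕ) ≤ a + 3 ∧ b ≤ (p.2 : ℕ) ∧ (p.2 : ℕ) ≤ b + 3 then
    X4 (⟨(p.1 : ℕ) - a, by omega⟩, ⟨(p.2 : ℕ) - b, by omega⟩)
  else 0

/-!
Every vertex of `Q(n)` lies on four lines (its row, column, diagonal and antidiagonal), two
distinct squares share at most one line, and they are adjacent iff they share one. Hence the
adjacency matrix is `L₁ + L₂ + L₃ + L₄ - 4 I`, where `Lₖ` is the "same `k`-th line" matrix, and
any nonzero vector whose sum along every line vanishes is a `-4`-eigenvector. The pattern `X4`,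
the difference of the indicators of the two solutions of the 4-queens problem, is such a vector:
the two solutions meet every line in the same number of squares.
-/

open Matrix

section FiberMatrix

variable {V ι β : Type*} [DecidableEq β]

def fiberMatrix (R : Type*) [Zero R] [One R] (f : V → β) : Matrix V V R :=
  Matrix.of fun u v => if f u = f v then 1 else 0

lemma fiberMatrix_mulVec_eq_zero {R : Type*} [Fintype V] [NonAssocSemiring R] {f : V → β}
    {X : V → R} (hX : ∀ c, ∑ u with f u = c, X u = 0) : fiberMatrix R f *ᵥ X = 0 := by
  ext v
  simpa [fiberMatrix, Matrix.mulVec, dotProduct, Finset.sum_filter, eq_comm] using hX (f v)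

variable {R : Type*} [DecidableEq V] [Fintype ι] [Ring R] {G : SimpleGraph V}
  [DecidableRel G.Adj] {f : ι → V → β}

lemma adjMatrix_eq_sum_fiberMatrix_sub
    (hadj : ∀ u v, G.Adj u v ↔ u ≠ v ∧ ∃ k, f k u = f k v)
    (hshare : ∀ ⦃u v⦄, u ≠ v → ∀ k l, f k u = f k v → f l u = f l v → k = l) :
    G.adjMatrix R = ∑ k, fiberMatrix R (f k) - (Fintype.card ι : R) • 1 := by
  ext u v
  by_cases huv : u = v
  · subst huv
    simp [fiberMatrix, Matrix.sum_apply]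
  · simp only [SimpleGraph.adjMatrix_apply, hadj, Matrix.sub_apply, Matrix.sum_apply,
      fiberMatrix, Matrix.of_apply, Matrix.smul_apply, Matrix.one_apply_ne huv, smul_zero,
      sub_zero, ne_eq, huv, not_false_eq_true, true_and]
    exact (Fintype.sum_ite_eq_ite_exists _ (hshare huv) 1).symm

theorem adjMatrix_mulVec_eq_neg_card_smul [Fintype V]
    (hadj : ∀ u v, G.Adj u v ↔ u ≠ v ∧ ∃ k, f k u = f k v)
    (hshare : ∀ ⦃u v⦄, u ≠ v → ∀ k l, f k u = f k v → f l u = f l v → k = l)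
    {X : V → R} (hX : ∀ k c, ∑ u with f k u = c, X u = 0) :
    G.adjMatrix R *ᵥ X = -(Fintype.card ι : R) • X := by
  rw [adjMatrix_eq_sum_fiberMatrix_sub hadj hshare, Matrix.sub_mulVec, Matrix.sum_mulVec,
    Matrix.smul_mulVec, Matrix.one_mulVec]
  simp [fiberMatrix_mulVec_eq_zero (hX _)]

end FiberMatrix

lemma Finset.sum_comp_eq_of_map_val_eq {α β M : Type*} [AddCommMonoid M] {s t : Finset α}
    {f : α → β} (h : s.val.map f = t.val.map f) (g : β → M) :
    ∑ a ∈ s, g (f a) = ∑ a ∈ t, g (f a) := by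
  simp only [Finset.sum_eq_multiset_sum]
  simpa only [Multiset.map_map, Function.comp_def] using congrArg (fun m => (m.map g).sum) h

def queensLine {n : ℕ} : Fin 4 → Fin n × Fin n → ℤ
  | 0, u => u.1
  | 1, u => u.2
  | 2, u => (u.1 : ℤ) - u.2
  | 3, u => (u.1 : ℤ) + u.2

lemma queensGraph_adj_iff {n : ℕ} (p u : Fin n × Fin n) :
    (queensGraph n).Adj p u ↔ p ≠ u ∧ ∃ k, queensLine k p = queensLine k u := by
  have hrel : ∀ a b, queensRel n a b ↔ ∃ k, queensLine k a = queensLine k b := fun a b => by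
    simp [queensRel, Fin.exists_fin_succ, queensLine, Fin.val_inj]
  simp only [queensGraph, SimpleGraph.fromRel_adj, hrel, eq_comm (a := queensLine _ u), or_self]

lemma queensLine_share {n : ℕ} {p u : Fin n × Fin n} (hpu : p ≠ u) (k l : Fin 4)
    (hk : queensLine k p = queensLine k u) (hl : queensLine l p = queensLine l u) : k = l := by
  obtain ⟨⟨i, j⟩, ⟨i', j'⟩⟩ := (p, u)
  simp only [ne_eq, Prod.ext_iff, Fin.ext_iff] at hpu
  fin_cases k <;> fin_cases l <;> simp [queensLine] at hk hl ⊢ <;> omega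

lemma queensLine_map_castLE {n m : ℕ} (h : m ≤ n) (k : Fin 4) (q : Fin m × Fin m) :
    queensLine k (q.map (Fin.castLE h) (Fin.castLE h)) = queensLine k q := by
  fin_cases k <;> rfl

def fourQueens₁ : Finset (Fin 4 × Fin 4) := {(0, 1), (1, 3), (2, 0), (3, 2)}

def fourQueens₂ : Finset (Fin 4 × Fin 4) := {(0, 2), (1, 0), (2, 3), (3, 1)}

lemma X4_eq_indicator_sub_indicator (q : Fin 4 × Fin 4) :
    X4 q = (if q ∈ fourQueens₁ then 1 else 0) - if q ∈ fourQueens₂ then 1 else 0 := by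
  fin_cases q <;> simp [X4, fourQueens₁, fourQueens₂]

lemma map_queensLine_fourQueens₁ (k : Fin 4) :
    fourQueens₁.val.map (queensLine k) = fourQueens₂.val.map (queensLine k) := by
  fin_cases k <;> decide

lemma sum_fiber_queensLine_X4 (k : Fin 4) (c : ℤ) : ∑ q with queensLine k q = c, X4 q = 0 :=
  calc ∑ q with queensLine k q = c, X4 q
      = ∑ q ∈ fourQueens₁, (if queensLine k q = c then 1 else 0)
          - ∑ q ∈ fourQueens₂, (if queensLine k q = c then (1 : ℝ) else 0) := by
        simp [X4_eq_indicator_sub_indicator, Finset.sum_sub_distrib, Finset.sum_boole,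
          Finset.filter_inter]
    _ = 0 := by
      rw [Finset.sum_comp_eq_of_map_val_eq (map_queensLine_fourQueens₁ k)
        (fun b => if b = c then 1 else 0), sub_self]

lemma Xab_zero_zero_map_castLE {n : ℕ} (h : 4 ≤ n) (q : Fin 4 × Fin 4) :
    Xab n 0 0 (q.map (Fin.castLE h) (Fin.castLE h)) = X4 q := by
  simp [Xab, Fin.is_le]

lemma Xab_zero_zero_of_notMem_range {n : ℕ} (h : 4 ≤ n) {u : Fin n × Fin n}
    (hu : u ∉ Set.range (Prod.map (Fin.castLE h) (Fin.castLE h))) : Xab n 0 0 u = 0 :=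
  dif_neg fun hsq => hu ⟨(⟨u.1, by omega⟩, ⟨u.2, by omega⟩), rfl⟩

lemma sum_fiber_queensLine_Xab {n : ℕ} (h : 4 ≤ n) (k : Fin 4) (c : ℤ) :
    ∑ u with queensLine k u = c, Xab n 0 0 u = 0 :=
  calc ∑ u with queensLine k u = c, Xab n 0 0 u
      = ∑ q with queensLine k q = c, X4 q := by
        simp only [Finset.sum_filter]
        refine (Fintype.sum_of_injective _
          ((Fin.castLE_injective h).prodMap (Fin.castLE_injective h)) _ _
          (fun u hu => by rw [Xab_zero_zero_of_notMem_range h hu, ite_self])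
          fun q => by rw [queensLine_map_castLE, Xab_zero_zero_map_castLE]).symm
    _ = 0 := sum_fiber_queensLine_X4 k c

/-- `-4` is an eigenvalue of the n-Queens' graph for every `n ≥ 4`. -/
theorem queens_neg_four_eigenvalue (n : ℕ) (h : 4 ≤ n) :
    IsAdjEigenvalue (queensGraph n) (-4) := by
  refine ⟨Xab n 0 0, fun h0 => ?_, ?_⟩
  · have h01 : Xab n 0 0 (((0, 1) : Fin 4 × Fin 4).map (Fin.castLE h) (Fin.castLE h)) = 1 := by
      simp only [Xab_zero_zero_map_castLE, X4]; norm_num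
    simp [h0] at h01
  · simpa using adjMatrix_mulVec_eq_neg_card_smul (queensGraph_adj_iff (n := n))
      (fun _ _ => queensLine_share) (sum_fiber_queensLine_Xab h)
end

section
/- For n ≥ 4 and (a,b) ∈ [n−3] × [n−3], let X_n^{(a,b)} ∈ ℝ^{[n]×[n]} be the vector obtained by placing a translated copy of X_4 at position (a,b): X_n^{(a,b)}(i,j) = X_4(i−a+1, j−b+1) when a ≤ i ≤ a+3 and b ≤ j ≤ b+3, and 0 otherwise, where X_4 has entries 1 at (1,2),(2,4),(3,1),(4,3), entries −1 at (1,3),(2,1),(3,4),(4,2), and 0 elsewhere. Then the family {X_n^{(a,b)} : (a,b) ∈ [n−3]²} is linearly independent. -/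
/-!
Order the corners `(a, b)` lexicographically. The translate with corner `(a, b)` takes the value
`X₄(0, 1) = 1` at the square `(a, b + 1)`, while every lexicographically later translate vanishes
there: its window either misses that square or places it at the zero corner `X₄(0, 0)`. The family
is therefore triangular with respect to these pivot squares, hence linearly independent.
-/

open Finset

theorem linearIndependent_of_pivot {ι κ R : Type*} [Ring R] [NoZeroDivisors R] [LinearOrder ι]
    (f : ι → κ → R) (p : ι → κ) (hpiv : ∀ i, f i (p i) ≠ 0)
    (hlater : ∀ i j, i < j → f j (p i) = 0) : LinearIndependent R f := by
  classical
  rw [linearIndependent_iff']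
  intro s g hsum
  by_contra! hg
  set t := s.filter (fun i => g i ≠ 0)
  have ht : t.Nonempty := by
    obtain ⟨i, hi, hgi⟩ := hg
    exact ⟨i, mem_filter.mpr ⟨hi, hgi⟩⟩
  set i := t.min' ht
  obtain ⟨hi, hgi⟩ := mem_filter.mp (t.min'_mem ht)
  have heval : ∑ j ∈ s, g j * f j (p i) = 0 := by
    simpa only [Finset.sum_apply, Pi.smul_apply, smul_eq_mul, Pi.zero_apply]
      using congrFun hsum (p i)
  rw [sum_eq_single_of_mem i hi] at heval
  · exact mul_ne_zero hgi (hpiv i) heval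
  intro j hj hji
  by_cases hgj : g j = 0
  · rw [hgj, zero_mul]
  · have hij : i < j := lt_of_le_of_ne (t.min'_le j (mem_filter.mpr ⟨hj, hgj⟩)) hji.symm
    rw [hlater i j hij, mul_zero]

theorem Xab_apply_of_eq_of_eq_succ {n a b : ℕ} {p : Fin n × Fin n} (h₁ : (p.1 : ℕ) = a)
    (h₂ : (p.2 : ℕ) = b + 1) : Xab n a b p = 1 := by
  rw [Xab, dif_pos (by omega)]
  simp [X4, Fin.ext_iff, h₁, h₂]

theorem Xab_apply_of_lex_lt {n a b a' b' : ℕ} (hlt : a < a' ∨ a = a' ∧ b < b')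
    {p : Fin n × Fin n} (h₁ : (p.1 : ℕ) = a) (h₂ : (p.2 : ℕ) = b + 1) : Xab n a' b' p = 0 := by
  rw [Xab]
  split_ifs with hwin
  · obtain ⟨rfl, rfl⟩ : a' = a ∧ b' = b + 1 := by omega
    simp [X4, Fin.ext_iff, h₁, h₂]
  · rfl

theorem Xab_linearIndependent_general (n : ℕ) :
    LinearIndependent ℝ (fun ab : Fin (n - 3) × Fin (n - 3) =>
      Xab n (ab.1 : ℕ) (ab.2 : ℕ)) := by
  let pivot : Fin (n - 3) × Fin (n - 3) → Fin n × Fin n :=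
    fun ab => (⟨ab.1, by omega⟩, ⟨ab.2 + 1, by omega⟩)
  rw [← linearIndependent_equiv toLex.symm]
  refine linearIndependent_of_pivot _ (pivot ∘ ofLex) (fun ab => ?_) (fun ab ab' hlt => ?_)
  · exact ne_of_eq_of_ne (Xab_apply_of_eq_of_eq_succ rfl rfl) one_ne_zero
  · rw [Prod.Lex.lt_iff, Fin.lt_def, Fin.lt_def, ← Fin.val_inj] at hlt
    exact Xab_apply_of_lex_lt hlt rfl rfl

/-- the family of translated copies of `X₄` is linearly independent. -/
theorem Xab_linearIndependent (n : ℕ) (h : 4 ≤ n) :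
    LinearIndependent ℝ (fun ab : Fin (n - 3) × Fin (n - 3) =>
      Xab n (ab.1 : ℕ) (ab.2 : ℕ)) :=
  Xab_linearIndependent_general n
end

section
/- For n ≥ 4 and each (a,b) ∈ [n−3] × [n−3], the vector X_n^{(a,b)} (the translated copy of the 4×4 pattern X_4 placed with upper-left corner at (a,b), zero elsewhere) is an eigenvector of the n-Queens' graph Q(n) with eigenvalue −4. -/
/-!
A cell `p` lies on four queen lines (its row, column, diagonal and antidiagonal), and two
distinct cells share at most one of them. Hence, for the adjacency matrix `A` of `Q(n)`,
`(A X) p` is the sum of the four line sums of `X` through `p` minus `4 X p`. Each line of `X₄`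
meets its support in either no cell or in one `+1` and one `-1`, so all line sums of a translate
of `X₄` vanish and `A X = -4 X`.
-/

open Finset

open Matrix

def lineLevel {m k : ℕ} (d : ℤ × ℤ) (p : Fin m × Fin k) : ℤ := d.1 * p.1 + d.2 * p.2

/-- `lineLevel d` is constant exactly along the lines with normal `d`; these four normals give the
rows, columns, diagonals and antidiagonals. -/
def queenNormal : Fin 4 → ℤ × ℤ := ![(1, 0), (0, 1), (1, -1), (1, 1)]

lemma queensGraph_adj_indicator {n : ℕ} (p q : Fin n × Fin n) :
    (if (queensGraph n).Adj p q then (1 : ℝ) else 0) =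
      ∑ k, (if lineLevel (queenNormal k) p = lineLevel (queenNormal k) q then 1 else 0) -
        if p = q then 4 else 0 := by
  simp only [queensGraph, SimpleGraph.fromRel_adj, ne_eq, queensRel, lineLevel, queenNormal,
    Fin.sum_univ_four, Matrix.cons_val, one_mul, zero_mul, neg_mul, add_zero, zero_add,
    Prod.ext_iff, Fin.ext_iff]
  split_ifs <;> first | omega | norm_num

lemma queensGraph_adjMatrix_mulVec_apply {n : ℕ} (X : Fin n × Fin n → ℝ)
    (p : Fin n × Fin n) :
    ((queensGraph n).adjMatrix ℝ *ᵥ X) p =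
      ∑ k, ∑ q, (if lineLevel (queenNormal k) p = lineLevel (queenNormal k) q then X q else 0) -
        4 * X p := by
  simp only [Matrix.mulVec, dotProduct, SimpleGraph.adjMatrix_apply, queensGraph_adj_indicator,
    sub_mul, Finset.sum_sub_distrib, Finset.sum_mul, ite_mul, one_mul, zero_mul]
  rw [Finset.sum_comm, Finset.sum_ite_eq]
  simp only [mem_univ, if_true]

theorem queensGraph_adjMatrix_mulVec_eq_neg_four_smul {n : ℕ} (X : Fin n × Fin n → ℝ)
    (hX : ∀ k (p : Fin n × Fin n),
      ∑ q, (if lineLevel (queenNormal k) p = lineLevel (queenNormal k) q then X q else 0) = 0) :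
    (queensGraph n).adjMatrix ℝ *ᵥ X = (-4 : ℝ) • X := by
  ext p
  rw [queensGraph_adjMatrix_mulVec_apply]
  simp [hX]

lemma X4_lineSum (k : Fin 4) (t : ℤ) :
    ∑ rc, (if lineLevel (queenNormal k) rc = t then X4 rc else 0) = 0 := by
  fin_cases k <;> simp [Fintype.sum_prod_type, Fin.sum_univ_four, lineLevel, queenNormal, X4] <;>
    split_ifs <;> first | omega | norm_num

def boxCell {n : ℕ} (a b : Fin (n - 3)) (rc : Fin 4 × Fin 4) : Fin n × Fin n :=
  (⟨a + rc.1, by omega⟩, ⟨b + rc.2, by omega⟩)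

section Box

variable {n : ℕ} (a b : Fin (n - 3))

lemma boxCell_injective : Function.Injective (boxCell a b) := by
  intro x y hxy
  simp only [boxCell, Prod.ext_iff, Fin.ext_iff] at hxy ⊢
  omega

lemma lineLevel_boxCell (d : ℤ × ℤ) (rc : Fin 4 × Fin 4) :
    lineLevel d (boxCell a b rc) = d.1 * a + d.2 * b + lineLevel d rc := by
  simp only [lineLevel, boxCell]
  push_cast
  ring

lemma Xab_boxCell (rc : Fin 4 × Fin 4) : Xab n a b (boxCell a b rc) = X4 rc := by
  have hbox : a ≤ (a + rc.1 : ℕ) ∧ (a + rc.1 : ℕ) ≤ a + 3 ∧ b ≤ (b + rc.2 : ℕ) ∧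
      (b + rc.2 : ℕ) ≤ b + 3 := by omega
  simp [Xab, boxCell, hbox]

lemma Xab_eq_zero_of_notMem_range {q : Fin n × Fin n} (hq : q ∉ Set.range (boxCell a b)) :
    Xab n a b q = 0 := by
  refine dif_neg fun hbox => hq ⟨(⟨q.1 - a, by omega⟩, ⟨q.2 - b, by omega⟩), ?_⟩
  simp only [boxCell, Prod.ext_iff, Fin.ext_iff]
  omega

lemma Xab_lineSum (k : Fin 4) (p : Fin n × Fin n) :
    ∑ q, (if lineLevel (queenNormal k) p = lineLevel (queenNormal k) q then Xab n a b q
      else 0) = 0 := by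
  rw [← Fintype.sum_of_injective (boxCell a b) (boxCell_injective a b)
    (fun rc => if lineLevel (queenNormal k) rc = lineLevel (queenNormal k) p -
      ((queenNormal k).1 * a + (queenNormal k).2 * b) then X4 rc else 0)]
  · exact X4_lineSum k _
  · intro q hq
    simp [Xab_eq_zero_of_notMem_range a b hq]
  · intro rc
    simp only [lineLevel_boxCell, Xab_boxCell]
    congr 1
    exact propext (by omega)

end Box

theorem Xab_eigenvector_general (n : ℕ) (a b : Fin (n - 3)) :
    Xab n (a : ℕ) (b : ℕ) ≠ 0 ∧
      ((queensGraph n).adjMatrix ℝ).mulVec (Xab n (a : ℕ) (b : ℕ)) =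
        (-4 : ℝ) • Xab n (a : ℕ) (b : ℕ) := by
  refine ⟨Function.ne_iff.mpr ⟨boxCell a b (0, 1), ?_⟩,
    queensGraph_adjMatrix_mulVec_eq_neg_four_smul _ (Xab_lineSum a b)⟩
  simp [Xab_boxCell, X4]

/-- each translated copy of `X₄` is an eigenvector of `Q(n)` with
eigenvalue `-4`. -/
theorem Xab_eigenvector (n : ℕ) (h : 4 ≤ n) (a b : Fin (n - 3)) :
    Xab n (a : ℕ) (b : ℕ) ≠ 0 ∧
      ((queensGraph n).adjMatrix ℝ).mulVec (Xab n (a : ℕ) (b : ℕ)) =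
        (-4 : ℝ) • Xab n (a : ℕ) (b : ℕ) :=
  Xab_eigenvector_general n a b
end
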